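/- Let n ≥ 2 be an integer and S : (L^0)^n → (L^0)^n an injective map with the local property satisfying S(θ) = θ which maps each L^0-line onto an L^0-line (for distinct x, y ∈ (L^0)^n, the image of l(x,y) under S equals l(S(x), S(y))). If x, y ∈ (L^0)^n are L^0-independent, then S(x) and S(y) are L^0-independent. -/
import Mathlib


/-!
Statements from "The fundamental theorem of affine geometry in `(L⁰)ⁿ`" (Wu–Long).

`L⁰`, the algebra of equivalence classes (under `P`-a.e. equality) of real valued
random variables on a probability space `(Ω, F, P)`, is modeled as `Ω →ₘ[P] ℝ`,
and `(L⁰)ⁿ` as `Fin n → (Ω →ₘ[P] ℝ)` with the pointwise `L⁰`-module structure.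
-/

open MeasureTheory

noncomputable section

variable {Ω : Type*} [MeasurableSpace Ω] {P : Measure Ω}

/-- `L⁰ = Ω →ₘ[P] ℝ` is a commutative ring under the pointwise a.e. operations. -/
instance : CommRing (Ω →ₘ[P] ℝ) :=
  { (inferInstance : AddCommGroup (Ω →ₘ[P] ℝ)),
    (inferInstance : CommMonoid (Ω →ₘ[P] ℝ)) with
    left_distrib := fun a b c => AEEqFun.toGerm_injective <| by
      simp only [AEEqFun.mul_toGerm, AEEqFun.add_toGerm, mul_add]
    right_distrib := fun a b c => AEEqFun.toGerm_injective <| by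
      simp only [AEEqFun.mul_toGerm, AEEqFun.add_toGerm, add_mul]
    zero_mul := fun a => AEEqFun.toGerm_injective <| by
      simp only [AEEqFun.mul_toGerm, AEEqFun.zero_toGerm, zero_mul]
    mul_zero := fun a => AEEqFun.toGerm_injective <| by
      simp only [AEEqFun.mul_toGerm, AEEqFun.zero_toGerm, mul_zero] }

/-- `Ĩ_A` : the equivalence class of the indicator function of a measurable set `A`. -/
def ind (P : Measure Ω) {A : Set Ω} (hA : MeasurableSet A) : Ω →ₘ[P] ℝ :=
  AEEqFun.mk (A.indicator fun _ => (1 : ℝ)) (aestronglyMeasurable_const.indicator hA)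

section Auxiliary

variable {Ω : Type*} [MeasurableSpace Ω] {P : Measure Ω}

lemma coeFn_ind {A : Set Ω} (hA : MeasurableSet A) :
    ⇑(ind P hA) =ᵐ[P] A.indicator (fun _ => (1 : ℝ)) :=
  AEEqFun.coeFn_mk _ _

lemma ind_mul_compl {A : Set Ω} (hA : MeasurableSet A) :
    ind P hA * ind P hA.compl = 0 := by
  apply AEEqFun.ext
  filter_upwards [AEEqFun.coeFn_mul (ind P hA) (ind P hA.compl),
    coeFn_ind hA, coeFn_ind hA.compl, AEEqFun.coeFn_zero (β := ℝ) (μ := P)]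
    with ω h1 h2 h3 h4
  rw [h1, h4]
  show ind P hA ω * ind P hA.compl ω = 0
  rw [h2, h3]
  by_cases hω : ω ∈ A <;> simp [Set.indicator, hω]

lemma ind_add_compl {A : Set Ω} (hA : MeasurableSet A) :
    ind P hA + ind P hA.compl = 1 := by
  apply AEEqFun.ext
  filter_upwards [AEEqFun.coeFn_add (ind P hA) (ind P hA.compl),
    coeFn_ind hA, coeFn_ind hA.compl, AEEqFun.coeFn_one (β := ℝ) (μ := P)]
    with ω h1 h2 h3 h4
  rw [h1, h4]
  show ind P hA ω + ind P hA.compl ω = 1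
  rw [h2, h3]
  by_cases hω : ω ∈ A <;> simp [Set.indicator, hω]

/-- Every `ξ ∈ L⁰` has a "support" set `A` and a partial inverse `ξ'` with
`ξ' * ξ = Ĩ_A` and `Ĩ_A * ξ = ξ`. -/
lemma exists_pinv (ξ : Ω →ₘ[P] ℝ) :
    ∃ (A : Set Ω) (hA : MeasurableSet A) (ξ' : Ω →ₘ[P] ℝ),
      ξ' * ξ = ind P hA ∧ ind P hA * ξ = ξ := by
  have hsm : AEStronglyMeasurable (⇑ξ) P := ξ.aestronglyMeasurable
  set g : Ω → ℝ := hsm.mk ⇑ξ with hg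
  have hgm : Measurable g := hsm.stronglyMeasurable_mk.measurable
  have hgeq : ⇑ξ =ᵐ[P] g := hsm.ae_eq_mk
  set A : Set Ω := (g ⁻¹' {0})ᶜ with hAdef
  have hA : MeasurableSet A := (hgm (measurableSet_singleton 0)).compl
  refine ⟨A, hA, AEEqFun.mk (fun ω => (g ω)⁻¹) (hgm.inv.aestronglyMeasurable), ?_, ?_⟩
  · apply AEEqFun.ext
    filter_upwards [AEEqFun.coeFn_mul (AEEqFun.mk (fun ω => (g ω)⁻¹)
      (hgm.inv.aestronglyMeasurable)) ξ,
      AEEqFun.coeFn_mk (fun ω => (g ω)⁻¹) (hgm.inv.aestronglyMeasurable),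
      hgeq, coeFn_ind hA] with ω h1 h2 h3 h4
    rw [h1, h4]
    show (AEEqFun.mk (fun ω => (g ω)⁻¹) (hgm.inv.aestronglyMeasurable)) ω * ξ ω
      = A.indicator (fun _ => (1:ℝ)) ω
    rw [h2, h3]
    by_cases hω : g ω = 0 <;> simp [Set.indicator, hAdef, hω]
  · apply AEEqFun.ext
    filter_upwards [AEEqFun.coeFn_mul (ind P hA) ξ, coeFn_ind hA, hgeq]
      with ω h1 h2 h3
    rw [h1]
    show ind P hA ω * ξ ω = ξ ω
    rw [h2, h3]
    by_cases hω : g ω = 0 <;> simp [Set.indicator, hAdef, hω]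

lemma one_ne_zero_L0 [IsProbabilityMeasure P] : (1 : Ω →ₘ[P] ℝ) ≠ 0 := by
  intro h
  have e1 := AEEqFun.coeFn_one (β := ℝ) (μ := P)
  rw [h] at e1
  have e2 := AEEqFun.coeFn_zero (β := ℝ) (μ := P)
  have e3 : (0 : Ω → ℝ) =ᵐ[P] (1 : Ω → ℝ) := e2.symm.trans e1
  have : (ae P).NeBot := ae_neBot.2 (IsProbabilityMeasure.ne_zero P)
  obtain ⟨ω, hω⟩ := e3.exists
  exact zero_ne_one hω

lemma smul_apply_L0 {n : ℕ} (a : Ω →ₘ[P] ℝ) (u : Fin n → Ω →ₘ[P] ℝ) (i : Fin n) :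
    (a • u) i = a * u i := rfl

/-- Key step: under the hypotheses of the theorem, the first coefficient of a
vanishing combination of `S x`, `S y` vanishes. -/
lemma key_step [IsProbabilityMeasure P] (n : ℕ)
    (S : (Fin n → Ω →ₘ[P] ℝ) → (Fin n → Ω →ₘ[P] ℝ))
    (hinj : Function.Injective S)
    (hloc : ∀ (x : Fin n → Ω →ₘ[P] ℝ) (A : Set Ω) (hA : MeasurableSet A),
        ind P hA • S (ind P hA • x) = ind P hA • S x)
    (hS0 : S 0 = 0)
    (hline : ∀ x y : Fin n → Ω →ₘ[P] ℝ, x ≠ y →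
        S '' {z | ∃ lam : Ω →ₘ[P] ℝ, z = lam • x + (1 - lam) • y}
          = {z | ∃ lam : Ω →ₘ[P] ℝ, z = lam • S x + (1 - lam) • S y})
    (x y : Fin n → Ω →ₘ[P] ℝ)
    (hxy : ∀ ξ η : Ω →ₘ[P] ℝ, ξ • x + η • y = 0 → ξ = 0 ∧ η = 0)
    (ξ η : Ω →ₘ[P] ℝ) (h : ξ • S x + η • S y = 0) : ξ = 0 := by
  have hx0 : (0 : Fin n → Ω →ₘ[P] ℝ) ≠ x := by
    intro e
    refine one_ne_zero_L0 (P := P) (hxy 1 0 ?_).1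
    rw [← e]
    funext i
    show (1 : Ω →ₘ[P] ℝ) * 0 + 0 * y i = 0
    ring
  have hy0 : (0 : Fin n → Ω →ₘ[P] ℝ) ≠ y := by
    intro e
    refine one_ne_zero_L0 (P := P) (hxy 0 1 ?_).2
    rw [← e]
    funext i
    show (0 : Ω →ₘ[P] ℝ) * x i + 1 * 0 = 0
    ring
  obtain ⟨A, hA, ξ', hξ'ξ, hindξ⟩ := exists_pinv ξ
  have hcomp : ∀ i, ξ * S x i + η * S y i = 0 := by
    intro i
    have := congrFun h i
    simpa [smul_apply_L0] using this
  have key3 : ind P hA • S x = (-(ξ' * η)) • S y := by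
    funext i
    show ind P hA * S x i = -(ξ' * η) * S y i
    rw [← hξ'ξ]
    linear_combination ξ' * hcomp i
  have hmemx : ind P hA • S x ∈
      {z | ∃ lam : Ω →ₘ[P] ℝ, z = lam • S 0 + (1 - lam) • S x} := by
    refine ⟨1 - ind P hA, ?_⟩
    rw [hS0]
    funext i
    show ind P hA * S x i
      = (1 - ind P hA) * 0 + (1 - (1 - ind P hA)) * S x i
    ring
  rw [← hline 0 x hx0] at hmemx
  obtain ⟨wx, ⟨lx, hwx⟩, hSwx⟩ := hmemx
  have hmemy : ind P hA • S x ∈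
      {z | ∃ lam : Ω →ₘ[P] ℝ, z = lam • S 0 + (1 - lam) • S y} := by
    refine ⟨1 + ξ' * η, ?_⟩
    rw [hS0, key3]
    funext i
    show -(ξ' * η) * S y i
      = (1 + ξ' * η) * 0 + (1 - (1 + ξ' * η)) * S y i
    ring
  rw [← hline 0 y hy0] at hmemy
  obtain ⟨wy, ⟨ly, hwy⟩, hSwy⟩ := hmemy
  have hw : wx = wy := hinj (hSwx.trans hSwy.symm)
  have hcoef : (1 - lx) • x + (-(1 - ly)) • y = 0 := by
    funext i
    have := congrFun (hwx.symm.trans (hw.trans hwy)) i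
    have hthis : lx * 0 + (1 - lx) * x i = ly * 0 + (1 - ly) * y i := this
    show (1 - lx) * x i + (-(1 - ly)) * y i = 0
    linear_combination hthis
  have hlx := (hxy _ _ hcoef).1
  have hwx0 : wx = 0 := by
    rw [hwx]
    funext i
    show lx * 0 + (1 - lx) * x i = 0
    linear_combination x i * hlx
  have hindSx : ind P hA • S x = 0 := by
    rw [← hSwx, hwx0, hS0]
  have hdecomp : S (ind P hA • x) = 0 := by
    have e1 : ind P hA • S (ind P hA • x) = 0 := by
      rw [hloc x A hA, hindSx]
    have e3 : ind P hA.compl • (ind P hA • x) = (0 : Fin n → Ω →ₘ[P] ℝ) := by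
      funext i
      show ind P hA.compl * (ind P hA * x i) = 0
      rw [← mul_assoc, mul_comm (ind P hA.compl), ind_mul_compl hA, zero_mul]
    have e2 : ind P hA.compl • S (ind P hA • x) = 0 := by
      have hl := hloc (ind P hA • x) Aᶜ hA.compl
      rw [e3, hS0] at hl
      rw [← hl]
      funext i
      show ind P hA.compl * 0 = 0
      ring
    have hsum : S (ind P hA • x)
        = ind P hA • S (ind P hA • x) + ind P hA.compl • S (ind P hA • x) := by
      funext i
      show S (ind P hA • x) i
        = ind P hA * S (ind P hA • x) i + ind P hA.compl * S (ind P hA • x) i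
      have h1 : ind P hA + ind P hA.compl = 1 := ind_add_compl hA
      linear_combination (-(S (ind P hA • x) i)) * h1
    rw [hsum, e1, e2, add_zero]
  have hindx : ind P hA • x = 0 := hinj (by rw [hdecomp, hS0])
  have hind0 : ind P hA = 0 := by
    refine (hxy (ind P hA) 0 ?_).1
    funext i
    have := congrFun hindx i
    have hthis : ind P hA * x i = 0 := this
    show ind P hA * x i + 0 * y i = 0
    linear_combination hthis
  rw [hind0, zero_mul] at hindξ
  exact hindξ.symm

end Auxiliary

/-- from Step 1 of the proof of Theorem 3.1: an injective map
`S : (L⁰)ⁿ → (L⁰)ⁿ` with the local property, `S 0 = 0`, mapping each `L⁰`-line onto an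
`L⁰`-line, maps `L⁰`-independent pairs to `L⁰`-independent pairs. -/
theorem image_L0_independent
    [IsProbabilityMeasure P] (n : ℕ) (hn : 2 ≤ n)
    (S : (Fin n → Ω →ₘ[P] ℝ) → (Fin n → Ω →ₘ[P] ℝ))
    (hinj : Function.Injective S)
    (hloc : ∀ (x : Fin n → Ω →ₘ[P] ℝ) (A : Set Ω) (hA : MeasurableSet A),
        ind P hA • S (ind P hA • x) = ind P hA • S x)
    (hS0 : S 0 = 0)
    (hline : ∀ x y : Fin n → Ω →ₘ[P] ℝ, x ≠ y →
        S '' {z | ∃ lam : Ω →ₘ[P] ℝ, z = lam • x + (1 - lam) • y}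
          = {z | ∃ lam : Ω →ₘ[P] ℝ, z = lam • S x + (1 - lam) • S y})
    (x y : Fin n → Ω →ₘ[P] ℝ)
    (hxy : ∀ ξ η : Ω →ₘ[P] ℝ, ξ • x + η • y = 0 → ξ = 0 ∧ η = 0) :
    ∀ ξ η : Ω →ₘ[P] ℝ, ξ • S x + η • S y = 0 → ξ = 0 ∧ η = 0 := by
  intro ξ η h
  constructor
  · exact key_step n S hinj hloc hS0 hline x y hxy ξ η h
  · refine key_step n S hinj hloc hS0 hline y x ?_ η ξ ?_
    · intro a b hab
      have := hxy b a (by rw [add_comm]; exact hab)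
      exact ⟨this.2, this.1⟩
    · rw [add_comm]; exact h
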